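/- arXiv:2407.19671 — 4 statements merged into one kernel-verified Lean document; each statement's English description precedes it below -/
import Mathlib

section
/- With B_k as above (B_k = A_k + i(k/|k|)×A_k, A_k·k = 0, |A_k| = 1/√2, A_{-k} = A_k), one has B_k ⊗ B_{-k} + B_{-k} ⊗ B_k = Id − (k/|k|) ⊗ (k/|k|). -/
lemma conj_expand (a b c d : ℝ) :
    ((a:ℂ) + Complex.I * c) * (starRingEnd ℂ) ((b:ℂ) + Complex.I * d) +
      (starRingEnd ℂ) ((a:ℂ) + Complex.I * c) * ((b:ℂ) + Complex.I * d) =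
    ((2*(a*b) + 2*(c*d) : ℝ) : ℂ) := by
  simp only [map_add, map_mul, Complex.conj_I, Complex.conj_ofReal]
  push_cast
  ring_nf
  rw [Complex.I_sq]
  ring

set_option maxHeartbeats 2000000 in
/-- `B_k ⊗ B_{-k} + B_{-k} ⊗ B_k = Id − (k/|k|) ⊗ (k/|k|)`, where `B_{-k} = conj (B_k)`. -/
theorem stmt2 (lam0 : ℝ) (hlam : 1 ≤ lam0)
    (k : Fin 3 → ℤ) (hk : Real.sqrt (∑ i, ((k i : ℝ)) ^ 2) = lam0)
    (A : Fin 3 → ℝ)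
    (hAk : ∑ i, A i * (k i : ℝ) = 0)
    (hA : Real.sqrt (∑ i, (A i) ^ 2) = 1 / Real.sqrt 2)
    (B Bm : Fin 3 → ℂ)
    (hB : B = fun i => ((A i : ℂ) +
      Complex.I * ((crossProduct (fun j => (k j : ℝ) / lam0) A) i : ℝ)))
    (hBm : Bm = fun i => starRingEnd ℂ (B i)) :
    ∀ i j, B i * Bm j + Bm i * B j =
      (if i = j then (1 : ℂ) else 0) - (((k i : ℝ) / lam0 * ((k j : ℝ) / lam0) : ℝ) : ℂ) := by
  have hL : lam0 ≠ 0 := by linarith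
  have hk2 : ((k 0:ℝ))^2 + ((k 1:ℝ))^2 + ((k 2:ℝ))^2 = lam0^2 := by
    rw [Fin.sum_univ_three] at hk
    nlinarith [Real.sq_sqrt (show (0:ℝ) ≤ ((k 0:ℝ))^2 + ((k 1:ℝ))^2 + ((k 2:ℝ))^2 by positivity)]
  have hA2 : A 0^2 + A 1^2 + A 2^2 = 1/2 := by
    rw [Fin.sum_univ_three] at hA
    have h0 : (0:ℝ) ≤ A 0^2 + A 1^2 + A 2^2 := by positivity
    have h1 := Real.sq_sqrt h0
    rw [hA, div_pow, Real.sq_sqrt (by norm_num : (0:ℝ) ≤ 2)] at h1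
    norm_num at h1
    linarith
  rw [Fin.sum_univ_three] at hAk
  have hc : (crossProduct (fun j => (k j : ℝ) / lam0) A) =
      ![(k 1:ℝ)/lam0 * A 2 - (k 2:ℝ)/lam0 * A 1,
        (k 2:ℝ)/lam0 * A 0 - (k 0:ℝ)/lam0 * A 2,
        (k 0:ℝ)/lam0 * A 1 - (k 1:ℝ)/lam0 * A 0] := by
    rw [cross_apply]
  have hk2' : ((k 0:ℤ):ℂ)^2 + ((k 1:ℤ):ℂ)^2 + ((k 2:ℤ):ℂ)^2 = (lam0:ℂ)^2 := by
    have := congrArg (Complex.ofReal) hk2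
    push_cast at this ⊢
    linear_combination this
  have hA2' : ((A 0:ℝ):ℂ)^2 + ((A 1:ℝ):ℂ)^2 + ((A 2:ℝ):ℂ)^2 = 1/2 := by
    have := congrArg (Complex.ofReal) hA2
    push_cast at this ⊢
    linear_combination this
  have hAk' : ((A 0:ℝ):ℂ) * ((k 0:ℤ):ℂ) + ((A 1:ℝ):ℂ) * ((k 1:ℤ):ℂ) + ((A 2:ℝ):ℂ) * ((k 2:ℤ):ℂ) = 0 := by
    have := congrArg (Complex.ofReal) hAk
    push_cast at this ⊢
    linear_combination this
  have hL' : (lam0:ℂ) ≠ 0 := by exact_mod_cast hL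
  subst hB hBm
  intro i j
  fin_cases i <;> fin_cases j <;>
    simp only [hc, Matrix.cons_val_zero, Matrix.cons_val_one, Matrix.head_cons,
      Matrix.cons_val_two, Matrix.tail_cons, conj_expand, Fin.isValue,
      show ((⟨2, by norm_num⟩ : Fin 3)) = 2 from rfl] <;>
    norm_num
  · push_cast
    field_simp
    linear_combination ((1-2*(A 0:ℂ)^2)*hk2' + 2*(((k 1:ℤ):ℂ)^2+((k 2:ℤ):ℂ)^2)*hA2' + 2*((A 0:ℂ)*((k 0:ℤ):ℂ) - (A 1:ℂ)*((k 1:ℤ):ℂ) - (A 2:ℂ)*((k 2:ℤ):ℂ))*hAk')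
  · push_cast
    field_simp
    linear_combination (-2*(A 0:ℂ)*(A 1:ℂ)*hk2' - 2*((k 0:ℤ):ℂ)*((k 1:ℤ):ℂ)*hA2' + 2*(((k 0:ℤ):ℂ)*(A 1:ℂ) + ((k 1:ℤ):ℂ)*(A 0:ℂ))*hAk')
  · push_cast
    field_simp
    linear_combination (-2*(A 0:ℂ)*(A 2:ℂ)*hk2' - 2*((k 0:ℤ):ℂ)*((k 2:ℤ):ℂ)*hA2' + 2*(((k 0:ℤ):ℂ)*(A 2:ℂ) + ((k 2:ℤ):ℂ)*(A 0:ℂ))*hAk')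
  · push_cast
    field_simp
    linear_combination (-2*(A 1:ℂ)*(A 0:ℂ)*hk2' - 2*((k 1:ℤ):ℂ)*((k 0:ℤ):ℂ)*hA2' + 2*(((k 1:ℤ):ℂ)*(A 0:ℂ) + ((k 0:ℤ):ℂ)*(A 1:ℂ))*hAk')
  · push_cast
    field_simp
    linear_combination ((1-2*(A 1:ℂ)^2)*hk2' + 2*(((k 2:ℤ):ℂ)^2+((k 0:ℤ):ℂ)^2)*hA2' + 2*((A 1:ℂ)*((k 1:ℤ):ℂ) - (A 2:ℂ)*((k 2:ℤ):ℂ) - (A 0:ℂ)*((k 0:ℤ):ℂ))*hAk')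
  · push_cast
    field_simp
    linear_combination (-2*(A 1:ℂ)*(A 2:ℂ)*hk2' - 2*((k 1:ℤ):ℂ)*((k 2:ℤ):ℂ)*hA2' + 2*(((k 1:ℤ):ℂ)*(A 2:ℂ) + ((k 2:ℤ):ℂ)*(A 1:ℂ))*hAk')
  · push_cast
    field_simp
    linear_combination (-2*(A 2:ℂ)*(A 0:ℂ)*hk2' - 2*((k 2:ℤ):ℂ)*((k 0:ℤ):ℂ)*hA2' + 2*(((k 2:ℤ):ℂ)*(A 0:ℂ) + ((k 0:ℤ):ℂ)*(A 2:ℂ))*hAk')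
  · push_cast
    field_simp
    linear_combination (-2*(A 2:ℂ)*(A 1:ℂ)*hk2' - 2*((k 2:ℤ):ℂ)*((k 1:ℤ):ℂ)*hA2' + 2*(((k 2:ℤ):ℂ)*(A 1:ℂ) + ((k 1:ℤ):ℂ)*(A 2:ℂ))*hAk')
  · push_cast
    field_simp
    linear_combination ((1-2*(A 2:ℂ)^2)*hk2' + 2*(((k 0:ℤ):ℂ)^2+((k 1:ℤ):ℂ)^2)*hA2' + 2*((A 2:ℂ)*((k 2:ℤ):ℂ) - (A 0:ℂ)*((k 0:ℤ):ℂ) - (A 1:ℂ)*((k 1:ℤ):ℂ))*hAk')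
end

section
/- Let W(ξ) = Σ_{|k|=λ₀} a_k B_k e^{ik·ξ} be a Beltrami wave as above with a_{-k} = conj(a_k). Then (2π)^{-3} ∫_{𝕋³} W ⊗ W dξ = (1/2) Σ_{|k|=λ₀} |a_k|² (Id − (k/|k|) ⊗ (k/|k|)). -/
/-!
Expanding `W ⊗ W`, orthogonality of the characters `e^{i(k+l)·ξ}` on the torus keeps only the
pairs `l = -k`. As `A_{-k} = A_k`, `B_{-k}` is the complex conjugate of `B_k`, so after
symmetrizing in `k ↔ -k` the mode `k` contributes `|a_k|² · 2(A_k ⊗ A_k + C_k ⊗ C_k)` with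
`C_k = (k/|k|) × A_k`. Since `√2 A_k, √2 C_k, k/|k|` is an orthonormal frame, this is
`|a_k|² (Id - k/|k| ⊗ k/|k|)`.
-/

open MeasureTheory Real Matrix ComplexConjugate

open Complex in
theorem integral_Icc_exp_int_mul_I (m : ℤ) :
    ∫ t in Set.Icc 0 (2 * π), exp (I * (m * t)) = if m = 0 then ((2 * π : ℝ) : ℂ) else 0 := by
  rw [integral_Icc_eq_integral_Ioc, ← intervalIntegral.integral_of_le (by positivity)]
  split_ifs with hm
  · simp [hm]
  · simp_rw [← mul_assoc]
    rw [integral_exp_mul_complex (by simp [I_ne_zero, hm])]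
    have : I * m * ((2 * π : ℝ) : ℂ) = m * (2 * π * I) := by push_cast; ring
    simp only [this, exp_int_mul_two_pi_mul_I, ofReal_zero, mul_zero, Complex.exp_zero, sub_self,
      zero_div]

noncomputable def torusChar {ι : Type*} [Fintype ι] (m : ι → ℤ) (x : ι → ℝ) : ℂ :=
  Complex.exp (Complex.I * ((∑ j, (m j : ℝ) * x j : ℝ) : ℂ))

section torusChar

variable {ι : Type*} [Fintype ι]

theorem torusChar_eq_prod (m : ι → ℤ) (x : ι → ℝ) :
    torusChar m x = ∏ j, Complex.exp (Complex.I * (m j * x j)) := by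
  rw [torusChar, ← Complex.exp_sum, ← Finset.mul_sum]
  push_cast
  rfl

theorem torusChar_add (k l : ι → ℤ) (x : ι → ℝ) :
    torusChar (k + l) x = torusChar k x * torusChar l x := by
  simp only [torusChar, ← Complex.exp_add, ← mul_add, ← Complex.ofReal_add,
    ← Finset.sum_add_distrib, Pi.add_apply, Int.cast_add, add_mul]

@[fun_prop]
theorem continuous_torusChar (m : ι → ℤ) : Continuous (torusChar m) := by
  unfold torusChar
  fun_prop

theorem integral_torusChar (m : ι → ℤ) :
    ∫ x in Set.Icc (fun _ => 0) (fun _ => 2 * π), torusChar m x =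
      if m = 0 then (((2 * π) ^ Fintype.card ι : ℝ) : ℂ) else 0 := by
  simp_rw [torusChar_eq_prod]
  rw [← Set.pi_univ_Icc, volume_pi, Measure.restrict_pi_pi,
    integral_fintype_prod_eq_prod (fun j (t : ℝ) => Complex.exp (Complex.I * (m j * t)))]
  simp_rw [integral_Icc_exp_int_mul_I, Finset.prod_ite_zero, funext_iff]
  simp

theorem integral_mul_eq_sum_mul_neg {S : Finset (ι → ℤ)} (hS : ∀ k ∈ S, -k ∈ S)
    {c d : (ι → ℤ) → ℂ} {f g : (ι → ℝ) → ℂ} (hf : ∀ x, f x = ∑ k ∈ S, c k * torusChar k x)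
    (hg : ∀ x, g x = ∑ l ∈ S, d l * torusChar l x) :
    ∫ x in Set.Icc (fun _ => 0) (fun _ => 2 * π), f x * g x =
      (((2 * π) ^ Fintype.card ι : ℝ) : ℂ) * ∑ k ∈ S, c k * d (-k) := by
  have hprod : ∀ x, f x * g x = ∑ k ∈ S, ∑ l ∈ S, c k * d l * torusChar (k + l) x := fun x => by
    simp only [hf, hg, Finset.sum_mul_sum, torusChar_add]
    exact Finset.sum_congr rfl fun _ _ => Finset.sum_congr rfl fun _ _ => by ring
  have hint : ∀ k l, IntegrableOn (fun x => c k * d l * torusChar (k + l) x)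
      (Set.Icc (fun _ => 0) (fun _ => 2 * π)) := fun k l =>
    (by fun_prop : Continuous _).integrableOn_Icc
  simp_rw [hprod, integral_finsetSum _ fun k _ => integrable_finsetSum _ fun l _ => hint k l,
    integral_finsetSum _ fun l _ => hint _ l, integral_const_mul, integral_torusChar,
    add_eq_zero_iff_neg_eq, mul_ite, mul_zero, Finset.sum_ite_eq, Finset.mul_sum]
  refine Finset.sum_congr rfl fun k hk => ?_
  rw [if_pos (hS k hk)]
  ring

end torusChar

theorem Finset.sum_eq_sum_of_add_neg_eq {G M : Type*} [InvolutiveNeg G] [AddCommMonoid M]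
    [IsAddTorsionFree M] {S : Finset G} (hS : ∀ k, -k ∈ S ↔ k ∈ S) {f g : G → M}
    (h : ∀ k ∈ S, f k + f (-k) = g k + g (-k)) : ∑ k ∈ S, f k = ∑ k ∈ S, g k := by
  have hrev : ∀ φ : G → M, ∑ k ∈ S, φ (-k) = ∑ k ∈ S, φ k := fun φ =>
    Finset.sum_equiv (Equiv.neg G) (fun k => (hS k).symm) fun _ _ => rfl
  apply nsmul_right_injective two_ne_zero
  calc 2 • ∑ k ∈ S, f k = ∑ k ∈ S, (f k + f (-k)) := by
        rw [Finset.sum_add_distrib, hrev, two_nsmul]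
    _ = ∑ k ∈ S, (g k + g (-k)) := Finset.sum_congr rfl h
    _ = 2 • ∑ k ∈ S, g k := by rw [Finset.sum_add_distrib, hrev, two_nsmul]

theorem dotProduct_self_eq_sq_of_sqrt_eq {ι : Type*} [Fintype ι] {x : ι → ℝ} {r : ℝ}
    (h : √(∑ i, x i ^ 2) = r) : x ⬝ᵥ x = r ^ 2 := by
  rw [← h, Real.sq_sqrt (by positivity)]
  simp only [dotProduct, sq]

section crossProduct

variable {R : Type*} [CommRing R]

theorem cross_apply_mul_cross_apply (u v : Fin 3 → R) (i j : Fin 3) :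
    (u ⨯₃ v) i * (u ⨯₃ v) j =
      ((u ⬝ᵥ u) * (v ⬝ᵥ v) - (u ⬝ᵥ v) ^ 2) * (if i = j then 1 else 0) - (v ⬝ᵥ v) * (u i * u j)
        - (u ⬝ᵥ u) * (v i * v j) + (u ⬝ᵥ v) * (u i * v j + v i * u j) := by
  fin_cases i <;> fin_cases j <;> simp [cross_apply, dotProduct, Fin.sum_univ_three] <;> ring

theorem mul_add_cross_apply_mul_cross_apply {u v : Fin 3 → R} (hu : u ⬝ᵥ u = 1)
    (huv : u ⬝ᵥ v = 0) (i j : Fin 3) :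
    v i * v j + (u ⨯₃ v) i * (u ⨯₃ v) j = (v ⬝ᵥ v) * ((if i = j then 1 else 0) - u i * u j) := by
  rw [cross_apply_mul_cross_apply, hu, huv]
  ring

end crossProduct

/-- For a unit vector `u ⊥ A`, `i u × B = B`, which makes `B e^{i k·ξ}` (with `u = k/|k|`) a
Beltrami field. -/
noncomputable def beltramiVector (u A : Fin 3 → ℝ) : Fin 3 → ℂ :=
  fun i => (A i : ℂ) + Complex.I * ((u ⨯₃ A) i : ℝ)

theorem beltramiVector_neg (u A : Fin 3 → ℝ) (i : Fin 3) :
    beltramiVector (-u) A i = conj (beltramiVector u A i) := by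
  simp [beltramiVector, map_neg, Complex.conj_ofReal]

theorem beltramiVector_mul_conj_add_conj_mul {u A : Fin 3 → ℝ} (hu : u ⬝ᵥ u = 1)
    (huA : u ⬝ᵥ A = 0) (i j : Fin 3) :
    beltramiVector u A i * conj (beltramiVector u A j) +
        conj (beltramiVector u A i) * beltramiVector u A j =
      ((2 * (A ⬝ᵥ A) * ((if i = j then 1 else 0) - u i * u j) : ℝ) : ℂ) := by
  rw [mul_assoc, ← mul_add_cross_apply_mul_cross_apply hu huA]
  simp only [beltramiVector, map_add, map_mul, Complex.conj_ofReal, Complex.conj_I]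
  push_cast
  linear_combination (-2 * ((u ⨯₃ A) i * (u ⨯₃ A) j : ℂ)) * Complex.I_sq

theorem mul_beltramiVector_mul_conj_add {lam : ℝ} (hlam : lam ≠ 0) {v A : Fin 3 → ℝ}
    (hv : v ⬝ᵥ v = lam ^ 2) (hAv : A ⬝ᵥ v = 0) (hA : A ⬝ᵥ A = 1 / 2) (α : ℂ) (i j : Fin 3) :
    α * beltramiVector (fun t => v t / lam) A i *
        (conj α * conj (beltramiVector (fun t => v t / lam) A j)) +
      conj α * conj (beltramiVector (fun t => v t / lam) A i) *
        (α * beltramiVector (fun t => v t / lam) A j) =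
      Complex.normSq α * ((if i = j then 1 else 0) - ((v i * v j / lam ^ 2 : ℝ) : ℂ)) := by
  have hu : (fun t => v t / lam) = lam⁻¹ • v := by ext; simp [div_eq_inv_mul]
  have hpair := beltramiVector_mul_conj_add_conj_mul (u := fun t => v t / lam) (A := A)
    (by rw [hu, smul_dotProduct, dotProduct_smul, hv, smul_eq_mul, smul_eq_mul]; field_simp)
    (by rw [hu, smul_dotProduct, dotProduct_comm, hAv, smul_zero]) i j
  rw [hA] at hpair
  rw [← Complex.mul_conj]
  linear_combination (norm := skip) α * conj α * hpair
  push_cast [apply_ite ((↑) : ℝ → ℂ)]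
  ring

/-- `(2π)^{-3} ∫_{𝕋³} W ⊗ W dξ = (1/2) Σ_{|k|=λ₀} |a_k|² (Id − (k/|k|) ⊗ (k/|k|))`
for a Beltrami wave `W(ξ) = Σ_{|k|=λ₀} a_k B_k e^{ik·ξ}` with `a_{-k} = conj a_k`. -/
theorem stmt3 (lam0 : ℝ) (hlam : 1 ≤ lam0)
    (S : Finset (Fin 3 → ℤ))
    (hS : ∀ k : Fin 3 → ℤ, k ∈ S ↔ Real.sqrt (∑ i, ((k i : ℝ)) ^ 2) = lam0)
    (A : (Fin 3 → ℤ) → Fin 3 → ℝ)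
    (hAk : ∀ k ∈ S, ∑ i, A k i * (k i : ℝ) = 0)
    (hAnorm : ∀ k ∈ S, Real.sqrt (∑ i, (A k i) ^ 2) = 1 / Real.sqrt 2)
    (hAsymm : ∀ k ∈ S, A (-k) = A k)
    (B : (Fin 3 → ℤ) → Fin 3 → ℂ)
    (hB : ∀ k, B k = fun i => ((A k i : ℂ) +
      Complex.I * ((crossProduct (fun j => (k j : ℝ) / lam0) (A k)) i : ℝ)))
    (a : (Fin 3 → ℤ) → ℂ) (ha : ∀ k, a (-k) = starRingEnd ℂ (a k))
    (W : (Fin 3 → ℝ) → Fin 3 → ℂ)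
    (hW : ∀ x i, W x i = ∑ k ∈ S, a k * B k i *
      Complex.exp (Complex.I * ((∑ j, (k j : ℝ) * x j : ℝ) : ℂ))) :
    ∀ i j, ((1 / (2 * π) ^ 3 : ℝ) : ℂ) *
        (∫ x in Set.Icc (fun _ => (0 : ℝ)) (fun _ => 2 * π), W x i * W x j) =
      (1 / 2 : ℂ) * ∑ k ∈ S, (Complex.normSq (a k) : ℂ) *
        ((if i = j then (1 : ℂ) else 0) -
          (((k i : ℝ) * (k j : ℝ) / lam0 ^ 2 : ℝ) : ℂ)) := by
  intro i j
  have hlam0 : lam0 ≠ 0 := (zero_lt_one.trans_le hlam).ne'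
  have hnegS : ∀ k, -k ∈ S ↔ k ∈ S := fun k => by
    simp only [hS, Pi.neg_apply, Int.cast_neg, neg_sq]
  have hB' : ∀ k, B k = beltramiVector (fun t => (k t : ℝ) / lam0) (A k) := hB
  have hBneg : ∀ k ∈ S, B (-k) = fun t => conj (B k t) := fun k hk => by
    ext t
    rw [hB', hB', hAsymm k hk, ← beltramiVector_neg]
    congr 2
    ext
    simp [neg_div]
  rw [integral_mul_eq_sum_mul_neg (fun k hk => (hnegS k).2 hk) (fun x => hW x i) (fun x => hW x j),
    ← mul_assoc, ← Complex.ofReal_mul, Fintype.card_fin, one_div_mul_cancel (by positivity),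
    Complex.ofReal_one, one_mul, Finset.mul_sum]
  refine Finset.sum_eq_sum_of_add_neg_eq hnegS fun k hk => ?_
  have hA : A k ⬝ᵥ A k = 1 / 2 := by
    rw [dotProduct_self_eq_sq_of_sqrt_eq (hAnorm k hk), div_pow, one_pow, Real.sq_sqrt zero_le_two]
  rw [neg_neg, hBneg k hk, ha, Complex.normSq_conj, hB']
  simp only [Pi.neg_apply, Int.cast_neg, neg_mul_neg]
  linear_combination mul_beltramiVector_mul_conj_add hlam0
    (dotProduct_self_eq_sq_of_sqrt_eq ((hS k).1 hk)) (hAk k hk) hA (a k) i j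
end

section
/- For k, k' ∈ ℤ³ with |k| = |k'| = λ₀ and Beltrami vectors B_k, B_{k'} as above, one has (B_k ⊗ B_{k'} + B_{k'} ⊗ B_k)(k + k') = (B_k · B_{k'})(k + k'). -/
lemma stmt4_key0 (k0 k1 k2 l0 l1 l2 B0 B1 B2 C0 C1 C2 lam : ℂ)
    (e1 : k2*B0 - k0*B2 = -Complex.I*lam*B1)
    (e2 : k0*B1 - k1*B0 = -Complex.I*lam*B2)
    (f1 : l2*C0 - l0*C2 = -Complex.I*lam*C1)
    (f2 : l0*C1 - l1*C0 = -Complex.I*lam*C2)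
    (hbk : B0*k0 + B1*k1 + B2*k2 = 0) (hck : C0*l0 + C1*l1 + C2*l2 = 0) :
    (B0*C0 + C0*B0)*(k0+l0) + (B0*C1 + C0*B1)*(k1+l1) + (B0*C2 + C0*B2)*(k2+l2)
      = (B0*C0 + B1*C1 + B2*C2)*(k0+l0) := by
  linear_combination C0*hbk + B0*hck + C2*e1 - C1*e2 - B1*f2 + B2*f1

set_option maxHeartbeats 1600000 in
/-- `(B_k ⊗ B_{k'} + B_{k'} ⊗ B_k)(k + k') = (B_k · B_{k'})(k + k')` for Beltrami
vectors with `|k| = |k'| = λ₀`. -/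
theorem stmt4 (lam0 : ℝ) (hlam : 1 ≤ lam0)
    (k k' : Fin 3 → ℤ)
    (hk : Real.sqrt (∑ i, ((k i : ℝ)) ^ 2) = lam0)
    (hk' : Real.sqrt (∑ i, ((k' i : ℝ)) ^ 2) = lam0)
    (A A' : Fin 3 → ℝ)
    (hAk : ∑ i, A i * (k i : ℝ) = 0)
    (hAk' : ∑ i, A' i * (k' i : ℝ) = 0)
    (hA : Real.sqrt (∑ i, (A i) ^ 2) = 1 / Real.sqrt 2)
    (hA' : Real.sqrt (∑ i, (A' i) ^ 2) = 1 / Real.sqrt 2)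
    (B B' : Fin 3 → ℂ)
    (hB : B = fun i => ((A i : ℂ) +
      Complex.I * ((crossProduct (fun j => (k j : ℝ) / lam0) A) i : ℝ)))
    (hB' : B' = fun i => ((A' i : ℂ) +
      Complex.I * ((crossProduct (fun j => (k' j : ℝ) / lam0) A') i : ℝ))) :
    ∀ i, (∑ j, (B i * B' j + B' i * B j) * ((k j + k' j : ℤ) : ℂ)) =
      (∑ j, B j * B' j) * ((k i + k' i : ℤ) : ℂ) := by
  have hl0 : lam0 ≠ 0 := by linarith
  have hlC : (lam0 : ℂ) ≠ 0 := by exact_mod_cast hl0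
  have hk2 : ((k 0 : ℝ))^2 + ((k 1 : ℝ))^2 + ((k 2 : ℝ))^2 = lam0^2 := by
    rw [← hk, Real.sq_sqrt (by positivity), Fin.sum_univ_three]
  have hk'2 : ((k' 0 : ℝ))^2 + ((k' 1 : ℝ))^2 + ((k' 2 : ℝ))^2 = lam0^2 := by
    rw [← hk', Real.sq_sqrt (by positivity), Fin.sum_univ_three]
  have hk2C : ((k 0 : ℂ))^2 + ((k 1 : ℂ))^2 + ((k 2 : ℂ))^2 = (lam0:ℂ)^2 := by
    exact_mod_cast congrArg Complex.ofReal hk2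
  have hk'2C : ((k' 0 : ℂ))^2 + ((k' 1 : ℂ))^2 + ((k' 2 : ℂ))^2 = (lam0:ℂ)^2 := by
    exact_mod_cast congrArg Complex.ofReal hk'2
  have hAkC : (A 0 : ℂ)*(k 0 : ℂ) + (A 1 : ℂ)*(k 1:ℂ) + (A 2:ℂ)*(k 2:ℂ) = 0 := by
    have := congrArg Complex.ofReal hAk
    rw [Fin.sum_univ_three] at this
    push_cast at this ⊢
    linear_combination this
  have hAk'C : (A' 0 : ℂ)*(k' 0 : ℂ) + (A' 1 : ℂ)*(k' 1:ℂ) + (A' 2:ℂ)*(k' 2:ℂ) = 0 := by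
    have := congrArg Complex.ofReal hAk'
    rw [Fin.sum_univ_three] at this
    push_cast at this ⊢
    linear_combination this
  have e0 : (k 1:ℂ)*B 2 - (k 2:ℂ)*B 1 = -Complex.I*lam0*B 0 := by
    simp only [hB, cross_apply, Matrix.cons_val_zero, Matrix.cons_val_one,
      Matrix.head_cons, Matrix.cons_val_two, Matrix.tail_cons]
    push_cast
    field_simp
    linear_combination (Complex.I*(k 0:ℂ)) * hAkC - Complex.I * (A 0:ℂ) * hk2C +
      (lam0:ℂ)*((k 1:ℂ)*(A 2:ℂ) - (k 2:ℂ)*(A 1:ℂ)) * Complex.I_sq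
  have e1 : (k 2:ℂ)*B 0 - (k 0:ℂ)*B 2 = -Complex.I*lam0*B 1 := by
    simp only [hB, cross_apply, Matrix.cons_val_zero, Matrix.cons_val_one,
      Matrix.head_cons, Matrix.cons_val_two, Matrix.tail_cons]
    push_cast
    field_simp
    linear_combination (Complex.I*(k 1:ℂ)) * hAkC - Complex.I * (A 1:ℂ) * hk2C +
      (lam0:ℂ)*((k 2:ℂ)*(A 0:ℂ) - (k 0:ℂ)*(A 2:ℂ)) * Complex.I_sq
  have e2 : (k 0:ℂ)*B 1 - (k 1:ℂ)*B 0 = -Complex.I*lam0*B 2 := by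
    simp only [hB, cross_apply, Matrix.cons_val_zero, Matrix.cons_val_one,
      Matrix.head_cons, Matrix.cons_val_two, Matrix.tail_cons]
    push_cast
    field_simp
    linear_combination (Complex.I*(k 2:ℂ)) * hAkC - Complex.I * (A 2:ℂ) * hk2C +
      (lam0:ℂ)*((k 0:ℂ)*(A 1:ℂ) - (k 1:ℂ)*(A 0:ℂ)) * Complex.I_sq
  have f0 : (k' 1:ℂ)*B' 2 - (k' 2:ℂ)*B' 1 = -Complex.I*lam0*B' 0 := by
    simp only [hB', cross_apply, Matrix.cons_val_zero, Matrix.cons_val_one,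
      Matrix.head_cons, Matrix.cons_val_two, Matrix.tail_cons]
    push_cast
    field_simp
    linear_combination (Complex.I*(k' 0:ℂ)) * hAk'C - Complex.I * (A' 0:ℂ) * hk'2C +
      (lam0:ℂ)*((k' 1:ℂ)*(A' 2:ℂ) - (k' 2:ℂ)*(A' 1:ℂ)) * Complex.I_sq
  have f1 : (k' 2:ℂ)*B' 0 - (k' 0:ℂ)*B' 2 = -Complex.I*lam0*B' 1 := by
    simp only [hB', cross_apply, Matrix.cons_val_zero, Matrix.cons_val_one,
      Matrix.head_cons, Matrix.cons_val_two, Matrix.tail_cons]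
    push_cast
    field_simp
    linear_combination (Complex.I*(k' 1:ℂ)) * hAk'C - Complex.I * (A' 1:ℂ) * hk'2C +
      (lam0:ℂ)*((k' 2:ℂ)*(A' 0:ℂ) - (k' 0:ℂ)*(A' 2:ℂ)) * Complex.I_sq
  have f2 : (k' 0:ℂ)*B' 1 - (k' 1:ℂ)*B' 0 = -Complex.I*lam0*B' 2 := by
    simp only [hB', cross_apply, Matrix.cons_val_zero, Matrix.cons_val_one,
      Matrix.head_cons, Matrix.cons_val_two, Matrix.tail_cons]
    push_cast
    field_simp
    linear_combination (Complex.I*(k' 2:ℂ)) * hAk'C - Complex.I * (A' 2:ℂ) * hk'2C +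
      (lam0:ℂ)*((k' 0:ℂ)*(A' 1:ℂ) - (k' 1:ℂ)*(A' 0:ℂ)) * Complex.I_sq
  have hbk : B 0*(k 0:ℂ) + B 1*(k 1:ℂ) + B 2*(k 2:ℂ) = 0 := by
    simp only [hB, cross_apply, Matrix.cons_val_zero, Matrix.cons_val_one,
      Matrix.head_cons, Matrix.cons_val_two, Matrix.tail_cons]
    push_cast
    field_simp
    linear_combination (lam0:ℂ) * hAkC
  have hck : B' 0*(k' 0:ℂ) + B' 1*(k' 1:ℂ) + B' 2*(k' 2:ℂ) = 0 := by
    simp only [hB', cross_apply, Matrix.cons_val_zero, Matrix.cons_val_one,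
      Matrix.head_cons, Matrix.cons_val_two, Matrix.tail_cons]
    push_cast
    field_simp
    linear_combination (lam0:ℂ) * hAk'C
  intro i
  rw [Fin.sum_univ_three, Fin.sum_univ_three]
  fin_cases i <;> push_cast
  · linear_combination (B' 0)*hbk + (B 0)*hck + (B' 2)*e1 - (B' 1)*e2 - (B 1)*f2 + (B 2)*f1
  · linear_combination (B' 1)*hbk + (B 1)*hck + (B' 0)*e2 - (B' 2)*e0 - (B 2)*f0 + (B 0)*f2
  · linear_combination (B' 2)*hbk + (B 2)*hck + (B' 1)*e0 - (B' 0)*e1 - (B 0)*f1 + (B 1)*f0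
end

section
/- For every r ∈ ℕ₀, k ∈ ℤ³ and μ ≥ 1 there exists a constant C = C(r, |k|), independent of μ, such that sup_{y,τ} |D_y^r(∂_τ φ_k^{(j)} + i(k·y) φ_k^{(j)})(τ, y)| ≤ C μ^{r−1} for each j = 1,…,8. -/
open Filter Topology Metric

section AuxLemmas

variable {E' F' : Type*} [NormedAddCommGroup E'] [NormedSpace ℝ E']
  [NormedAddCommGroup F'] [NormedSpace ℝ F']

theorem aux_evEq_iteratedFDeriv {f₁ f : E' → F'} {x : E'} (h : f₁ =ᶠ[𝓝 x] f) (n : ℕ) :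
    iteratedFDeriv ℝ n f₁ x = iteratedFDeriv ℝ n f x := by
  simp only [← iteratedFDerivWithin_univ]
  exact (h.filter_mono nhdsWithin_le_nhds).iteratedFDerivWithin_eq h.self_of_nhds n

theorem aux_itfd_sub_const (f : E' → F') (hf : ContDiff ℝ (⊤ : ℕ∞) f) (a : E') (n : ℕ) :
    ∀ x, iteratedFDeriv ℝ n (fun z => f (z - a)) x = iteratedFDeriv ℝ n f (x - a) := by
  induction n with
  | zero =>
    intro x
    ext m
    simp [iteratedFDeriv_zero_apply]
  | succ n ih =>
    intro x
    rw [iteratedFDeriv_succ_eq_comp_left, iteratedFDeriv_succ_eq_comp_left]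
    simp only [Function.comp_apply]
    congr 1
    have h1 : (iteratedFDeriv ℝ n fun z => f (z - a)) = fun x => iteratedFDeriv ℝ n f (x - a) :=
      funext ih
    rw [h1]
    have hdiff : DifferentiableAt ℝ (iteratedFDeriv ℝ n f) (x - a) :=
      (hf.differentiable_iteratedFDeriv (by exact_mod_cast lt_top_iff_ne_top.2 (by simp))) (x - a)
    have ht : HasFDerivAt (fun z : E' => z - a) (ContinuousLinearMap.id ℝ E') x :=
      (hasFDerivAt_id x).sub_const a
    have h2 := (hdiff.hasFDerivAt.comp x ht).fderiv
    rw [show (fun x => iteratedFDeriv ℝ n f (x - a)) = iteratedFDeriv ℝ n f ∘ fun z => z - a from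
      rfl, h2]
    simp

theorem aux_coord_le_norm (x : EuclideanSpace ℝ (Fin 3)) (i : Fin 3) : |x i| ≤ ‖x‖ := by
  rw [EuclideanSpace.norm_eq]
  rw [show |x i| = Real.sqrt (‖x i‖ ^ 2) by rw [Real.sqrt_sq_eq_abs]; simp]
  apply Real.sqrt_le_sqrt
  exact Finset.single_le_sum (f := fun j => ‖x j‖ ^ 2) (fun j _ => by positivity) (Finset.mem_univ i)

theorem aux_finite_lattice (y : EuclideanSpace ℝ (Fin 3)) (R : ℝ) :
    {l : Fin 3 → ℤ | ‖y - (show EuclideanSpace ℝ (Fin 3) from WithLp.toLp 2 fun i => (l i : ℝ))‖ < R}.Finite := by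
  apply Set.Finite.subset (Set.Finite.pi (fun i : Fin 3 =>
    Set.finite_Icc (⌈y i - R⌉) (⌊y i + R⌋)))
  intro l hl
  simp only [Set.mem_pi, Set.mem_univ, Set.mem_Icc, forall_true_left]
  intro i
  have h1 : |y i - (l i : ℝ)| ≤ ‖y - (show EuclideanSpace ℝ (Fin 3) from WithLp.toLp 2 fun i => (l i : ℝ))‖ := by
    have := aux_coord_le_norm (y - (show EuclideanSpace ℝ (Fin 3) from WithLp.toLp 2 fun i => (l i : ℝ))) i
    simpa using this
  have h2 : |y i - (l i : ℝ)| < R := lt_of_le_of_lt h1 hl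
  rw [abs_lt] at h2
  refine ⟨Int.ceil_le.2 (by linarith), Int.le_floor.2 (by linarith)⟩

end AuxLemmas

set_option maxHeartbeats 1000000 in
/-- Material derivative bound:
`sup_{y,τ} |D_y^r(∂_τ φ_k^{(j)} + i(k·y)φ_k^{(j)})(τ,y)| ≤ C μ^{r−1}` with
`C = C(r,|k|)` independent of `μ ≥ 1`. -/
theorem stmt10 (c1 c2 : ℝ) (hc1 : Real.sqrt 3 / 2 < c1) (hc12 : c1 < c2) (hc2 : c2 < 1)
    (φ : EuclideanSpace ℝ (Fin 3) → ℝ)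
    (hφsm : ContDiff ℝ (⊤ : ℕ∞) φ) (hφcpt : HasCompactSupport φ)
    (hφsupp : tsupport φ ⊆ Metric.ball 0 c2)
    (hφnn : ∀ y, 0 ≤ φ y)
    (hφone : ∀ y ∈ Metric.ball (0 : EuclideanSpace ℝ (Fin 3)) c1, φ y = 1)
    (ψ : EuclideanSpace ℝ (Fin 3) → ℝ)
    (hψ : ∀ y, ψ y = ∑' k : Fin 3 → ℤ,
      (φ (y - (show EuclideanSpace ℝ (Fin 3) from WithLp.toLp 2 fun i => (k i : ℝ)))) ^ 2)
    (α : (Fin 3 → ℤ) → EuclideanSpace ℝ (Fin 3) → ℝ)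
    (hα : ∀ k y, α k y =
      φ (y - (show EuclideanSpace ℝ (Fin 3) from WithLp.toLp 2 fun i => (k i : ℝ))) / Real.sqrt (ψ y))
    (r : ℕ) (k : Fin 3 → ℤ) (v : Fin 3 → ZMod 2)
    (Φ : ℝ → ℝ → EuclideanSpace ℝ (Fin 3) → ℂ)
    (hΦ : ∀ μ τ y, Φ μ τ y =
      ∑' l : {l : Fin 3 → ℤ // ∀ i, ((l i : ZMod 2)) = v i},
        (α l.1 (μ • y) : ℂ) *
          Complex.exp (-Complex.I * ((∑ i, (k i : ℝ) * ((l.1 i : ℝ) / μ) : ℝ) : ℂ) * (τ : ℂ))) :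
    ∃ C > 0, ∀ μ : ℝ, 1 ≤ μ → ∀ (τ : ℝ) (y : EuclideanSpace ℝ (Fin 3)),
      ‖iteratedFDeriv ℝ r
          (fun z => deriv (fun s => Φ μ s z) τ +
            Complex.I * ((∑ i, (k i : ℝ) * z i : ℝ) : ℂ) * Φ μ τ z) y‖ ≤
        C * μ ^ ((r : ℝ) - 1) := by
  -- basic positivity
  have h3pos : (0:ℝ) < Real.sqrt 3 / 2 := by positivity
  have hc1pos : 0 < c1 := lt_trans h3pos hc1
  have hc2pos : 0 < c2 := lt_trans hc1pos hc12
  -- notation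
  set ic : (Fin 3 → ℤ) → EuclideanSpace ℝ (Fin 3) :=
    fun l => (show EuclideanSpace ℝ (Fin 3) from WithLp.toLp 2 fun i => (l i : ℝ)) with hic
  -- support of φ
  have hφ0 : ∀ w : EuclideanSpace ℝ (Fin 3), φ w ≠ 0 → ‖w‖ < c2 := by
    intro w hw
    have := hφsupp (subset_tsupport φ hw)
    simpa [Metric.mem_ball, dist_zero_right] using this
  -- summability of ψ terms
  have hsummand : ∀ y : EuclideanSpace ℝ (Fin 3),
      (Function.support fun l : Fin 3 → ℤ => (φ (y - ic l)) ^ 2).Finite := by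
    intro y
    apply (aux_finite_lattice y c2).subset
    intro l hl
    have : φ (y - ic l) ≠ 0 := by
      intro h; simp [h] at hl
    exact hφ0 _ this
  have hsumm : ∀ y : EuclideanSpace ℝ (Fin 3),
      Summable (fun l : Fin 3 → ℤ => (φ (y - ic l)) ^ 2) :=
    fun y => summable_of_finite_support (hsummand y)
  -- ψ ≥ 1
  have hψ1 : ∀ y : EuclideanSpace ℝ (Fin 3), 1 ≤ ψ y := by
    intro y
    set m : Fin 3 → ℤ := fun i => round (y i) with hm
    have hnorm : ‖y - ic m‖ ≤ Real.sqrt 3 / 2 := by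
      rw [EuclideanSpace.norm_eq]
      have hsum : (∑ i, ‖(y - ic m) i‖ ^ 2) ≤ 3 * (1/2)^2 := by
        have hterm : ∀ i : Fin 3, ‖(y - ic m) i‖ ^ 2 ≤ (1/2)^2 := by
          intro i
          have h1 : |y i - (m i : ℝ)| ≤ 1/2 := by
            simpa [hm] using abs_sub_round (y i)
          have h2 : ‖(y - ic m) i‖ = |y i - (m i : ℝ)| := by
            simp [hic, Real.norm_eq_abs]
          rw [h2]
          exact pow_le_pow_left₀ (abs_nonneg _) h1 2
        calc (∑ i, ‖(y - ic m) i‖ ^ 2)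
            ≤ ∑ _i : Fin 3, ((1:ℝ)/2)^2 := Finset.sum_le_sum (fun i _ => hterm i)
          _ = 3 * (1/2)^2 := by simp
      calc Real.sqrt (∑ i, ‖(y - ic m) i‖ ^ 2)
          ≤ Real.sqrt (3 * (1/2)^2) := Real.sqrt_le_sqrt hsum
        _ = Real.sqrt 3 / 2 := by
            rw [Real.sqrt_mul (by norm_num : (0:ℝ) ≤ 3),
              Real.sqrt_sq (by norm_num : (0:ℝ) ≤ 1/2)]
            ring
    have hball : y - ic m ∈ Metric.ball (0 : EuclideanSpace ℝ (Fin 3)) c1 := by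
      rw [Metric.mem_ball, dist_zero_right]
      exact lt_of_le_of_lt hnorm hc1
    have hone : φ (y - ic m) = 1 := hφone _ hball
    rw [hψ]
    have := Summable.le_tsum (hsumm y) m (fun j _ => sq_nonneg _)
    rw [hone] at this
    simpa using this
  have hψpos : ∀ y, (0:ℝ) < ψ y := fun y => lt_of_lt_of_le one_pos (hψ1 y)
  -- ψ smooth
  have hψsm : ContDiff ℝ (⊤ : ℕ∞) ψ := by
    rw [contDiff_iff_contDiffAt]
    intro y₀
    set T : Finset (Fin 3 → ℤ) := (aux_finite_lattice y₀ (1 + c2)).toFinset with hT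
    have hsumfin : ContDiff ℝ (⊤ : ℕ∞) (fun z : EuclideanSpace ℝ (Fin 3) =>
        ∑ l ∈ T, (φ (z - ic l)) ^ 2) := by
      apply ContDiff.sum
      intro l _
      exact (hφsm.comp (contDiff_id.sub contDiff_const)).pow 2
    apply hsumfin.contDiffAt.congr_of_eventuallyEq
    filter_upwards [Metric.ball_mem_nhds y₀ one_pos] with z hz
    rw [hψ]
    apply tsum_eq_sum
    intro l hl
    by_contra h
    have hφne : φ (z - ic l) ≠ 0 := by
      intro h0; exact h (by rw [show φ (z - ic l) = 0 from h0]; ring)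
    have h1 : ‖z - ic l‖ < c2 := hφ0 _ hφne
    have h2 : ‖y₀ - ic l‖ < 1 + c2 := by
      have hd : ‖y₀ - z‖ < 1 := by
        rw [← dist_eq_norm, dist_comm]
        rw [Metric.mem_ball] at hz
        exact hz
      calc ‖y₀ - ic l‖ ≤ ‖y₀ - z‖ + ‖z - ic l‖ := norm_sub_le_norm_sub_add_norm_sub _ _ _
        _ < 1 + c2 := by linarith
    apply hl
    rw [hT, Set.Finite.mem_toFinset]
    exact h2
  -- ψ periodic
  have hψper : ∀ (y : EuclideanSpace ℝ (Fin 3)) (l : Fin 3 → ℤ), ψ (y - ic l) = ψ y := by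
    intro y l
    rw [hψ, hψ]
    have key : ∀ j : Fin 3 → ℤ, y - ic l - ic j = y - ic (l + j) := by
      intro j
      ext i
      simp only [hic, PiLp.sub_apply, Pi.add_apply, PiLp.toLp_apply]
      push_cast
      ring
    calc (∑' j : Fin 3 → ℤ, (φ (y - ic l - ic j)) ^ 2)
        = ∑' j : Fin 3 → ℤ, (φ (y - ic (l + j))) ^ 2 := by
          apply tsum_congr; intro j; rw [key j]
      _ = ∑' j : Fin 3 → ℤ, (φ (y - ic j)) ^ 2 :=
          (Equiv.addLeft l).tsum_eq (fun j => (φ (y - ic j)) ^ 2)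
  -- α as translate of a fixed profile
  set α0 : EuclideanSpace ℝ (Fin 3) → ℝ := fun w => φ w / Real.sqrt (ψ w) with hα0
  have hαeq : ∀ (l : Fin 3 → ℤ) (y : EuclideanSpace ℝ (Fin 3)), α l y = α0 (y - ic l) := by
    intro l y
    rw [hα, hα0]
    simp only [hψper y l]
    rfl
  have hα0sm : ContDiff ℝ (⊤ : ℕ∞) α0 := by
    apply hφsm.div (hψsm.sqrt (fun x => ne_of_gt (hψpos x)))
    intro x
    exact ne_of_gt (Real.sqrt_pos.2 (hψpos x))
  have hα0supp : ∀ w, α0 w ≠ 0 → ‖w‖ < c2 := by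
    intro w hw
    apply hφ0
    intro h
    apply hw
    rw [hα0]
    simp [h]
  -- the localized profile g
  set g : EuclideanSpace ℝ (Fin 3) → ℂ :=
    fun w => (Complex.I * ((∑ i, (k i : ℝ) * w i : ℝ) : ℂ)) * (α0 w : ℂ) with hg
  have hgsm : ContDiff ℝ (⊤ : ℕ∞) g := by
    have hlin : ContDiff ℝ (⊤ : ℕ∞) (fun w : EuclideanSpace ℝ (Fin 3) => (∑ i, (k i : ℝ) * w i : ℝ)) :=
      ContDiff.sum fun i _ => contDiff_const.mul (EuclideanSpace.proj (𝕜 := ℝ) i).contDiff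
    exact (contDiff_const.mul (Complex.ofRealCLM.contDiff.comp hlin)).mul
      (Complex.ofRealCLM.contDiff.comp hα0sm)
  have hgcpt : HasCompactSupport g := by
    apply HasCompactSupport.intro (isCompact_closedBall (0 : EuclideanSpace ℝ (Fin 3)) c2)
    intro w hw
    have hnorm : ¬ ‖w‖ ≤ c2 := by
      simpa [Metric.mem_closedBall, dist_zero_right] using hw
    have hz : α0 w = 0 := by
      by_contra h
      exact hnorm (le_of_lt (hα0supp w h))
    simp [hg, hz]
  obtain ⟨Cg, hCg⟩ : ∃ Cg, ∀ x, ‖iteratedFDeriv ℝ r g x‖ ≤ Cg :=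
    (hgcpt.iteratedFDeriv r).exists_bound_of_continuous
      (hgsm.continuous_iteratedFDeriv (by exact_mod_cast le_top))
  have hCg0 : 0 ≤ Cg := le_trans (norm_nonneg _) (hCg 0)
  refine ⟨Cg + 1, by positivity, ?_⟩
  intro μ hμ τ y
  have hμ0 : (0:ℝ) < μ := lt_of_lt_of_le one_pos hμ
  have hrpow : μ ^ ((r:ℝ) - 1) = μ ^ r / μ := by
    rw [Real.rpow_sub hμ0, Real.rpow_natCast, Real.rpow_one]
  set ε : ℝ := (1 - c2)/2 with hε
  have hεpos : 0 < ε := by simp only [hε]; linarith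
  have hεμ : 0 < ε / μ := div_pos hεpos hμ0
  -- points near y scale well
  have hnear : ∀ z : EuclideanSpace ℝ (Fin 3), dist z y < ε / μ → ‖μ • z - μ • y‖ < ε := by
    intro z hz
    rw [← smul_sub, norm_smul, Real.norm_eq_abs, abs_of_pos hμ0]
    calc μ * ‖z - y‖ < μ * (ε / μ) := by
          apply mul_lt_mul_of_pos_left _ hμ0
          rwa [← dist_eq_norm]
      _ = ε := by field_simp
  -- separation of lattice points in the parity class
  have hsep : ∀ l l' : Fin 3 → ℤ, (∀ i, (l i : ZMod 2) = v i) → (∀ i, (l' i : ZMod 2) = v i) →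
      l ≠ l' → (2:ℝ) ≤ ‖ic l - ic l'‖ := by
    intro l l' hl hl' hne
    obtain ⟨i, hi⟩ : ∃ i, l i ≠ l' i := by
      by_contra h
      push_neg at h
      exact hne (funext h)
    have hpar : ((l i : ZMod 2)) = ((l' i : ZMod 2)) := by rw [hl i, hl' i]
    have hdvd : (2:ℤ) ∣ (l i - l' i) := by
      have := (ZMod.intCast_eq_intCast_iff' (l i) (l' i) 2).1 hpar
      omega
    have habs : (2:ℤ) ≤ |l i - l' i| := by
      rcases hdvd with ⟨c, hc⟩
      have hc0 : c ≠ 0 := by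
        intro h; rw [h, mul_zero] at hc; omega
      rw [hc, abs_mul, abs_two]
      have := Int.one_le_abs hc0
      linarith
    have hcoord := aux_coord_le_norm (ic l - ic l') i
    have h2 : (2:ℝ) ≤ |(l i : ℝ) - (l' i : ℝ)| := by
      have h3 : ((2:ℤ):ℝ) ≤ |((l i - l' i : ℤ) : ℝ)| := by
        rw [← Int.cast_abs]
        exact_mod_cast habs
      push_cast at h3
      convert h3 using 2
    calc (2:ℝ) ≤ |(l i : ℝ) - (l' i : ℝ)| := h2
      _ ≤ _ := by convert hcoord using 2; simp [hic]
  by_cases hex : ∃ l : Fin 3 → ℤ, (∀ i, (l i : ZMod 2) = v i) ∧ ‖μ • y - ic l‖ < c2 + ε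
  · -- a unique relevant lattice point l₀
    obtain ⟨l₀, hl₀par, hl₀near⟩ := hex
    set ω : ℝ := ∑ i, (k i : ℝ) * ((l₀ i : ℝ) / μ) with hω
    -- uniqueness
    have huniq : ∀ (l : Fin 3 → ℤ), (∀ i, (l i : ZMod 2) = v i) →
        ∀ z : EuclideanSpace ℝ (Fin 3), dist z y < ε/μ → α l (μ • z) ≠ 0 → l = l₀ := by
      intro l hlpar z hz hne
      rw [hαeq] at hne
      have h1 : ‖μ • z - ic l‖ < c2 := hα0supp _ hne
      have h2 : ‖μ • y - ic l‖ < c2 + ε := by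
        calc ‖μ • y - ic l‖ ≤ ‖μ • y - μ • z‖ + ‖μ • z - ic l‖ :=
              norm_sub_le_norm_sub_add_norm_sub _ _ _
          _ < ε + c2 := by
              have h3 := hnear z hz
              rw [norm_sub_rev] at h3
              linarith
          _ = c2 + ε := by ring
      by_contra hll
      have hs := hsep l l₀ hlpar hl₀par hll
      have : ‖ic l - ic l₀‖ ≤ ‖ic l - μ • y‖ + ‖μ • y - ic l₀‖ :=
        norm_sub_le_norm_sub_add_norm_sub _ _ _
      rw [norm_sub_rev (ic l) (μ • y)] at this
      have hεle : c2 + ε < 1 := by simp only [hε]; linarith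
      linarith
    -- local single-term formula for Φ
    have hloc : ∀ (s : ℝ) (z : EuclideanSpace ℝ (Fin 3)), dist z y < ε/μ →
        Φ μ s z = (α l₀ (μ • z) : ℂ) * Complex.exp (-Complex.I * (ω:ℂ) * (s:ℂ)) := by
      intro s z hz
      rw [hΦ]
      rw [tsum_eq_single (⟨l₀, hl₀par⟩ : {l : Fin 3 → ℤ // ∀ i, ((l i : ZMod 2)) = v i}) ?_]
      intro l' hne
      have hz0 : α l'.1 (μ • z) = 0 := by
        by_contra h
        exact hne (Subtype.ext (huniq l'.1 l'.2 z hz h))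
      simp [hz0]
    set c : ℂ := Complex.exp (-Complex.I * (ω:ℂ) * (τ:ℂ)) * (μ:ℂ)⁻¹ with hc
    -- pointwise identity near y
    have hkey : ∀ z : EuclideanSpace ℝ (Fin 3), dist z y < ε/μ →
        deriv (fun s => Φ μ s z) τ + Complex.I * ((∑ i, (k i : ℝ) * z i : ℝ) : ℂ) * Φ μ τ z
          = c • g (μ • z - ic l₀) := by
      intro z hz
      have hder : deriv (fun s => Φ μ s z) τ =
          (α l₀ (μ • z) : ℂ) * (Complex.exp (-Complex.I * (ω:ℂ) * (τ:ℂ)) *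
            (-Complex.I * (ω:ℂ))) := by
        have h1 : (fun s : ℝ => Φ μ s z) =
            fun s : ℝ => (α l₀ (μ • z) : ℂ) * Complex.exp (-Complex.I * (ω:ℂ) * (s:ℂ)) :=
          funext fun s => hloc s z hz
        rw [h1]
        have h2 : HasDerivAt (fun s : ℝ => ((s:ℝ):ℂ)) 1 τ := by
          simpa using (hasDerivAt_id τ).ofReal_comp
        have h3 := ((h2.const_mul (-Complex.I * (ω:ℂ))).cexp).const_mul
          ((α l₀ (μ • z) : ℝ) : ℂ)
        simpa [mul_comm, mul_assoc] using h3.deriv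
      rw [hder, hloc τ z hz]
      -- algebraic identity
      have hαtr : α l₀ (μ • z) = α0 (μ • z - ic l₀) := hαeq l₀ (μ • z)
      have hcoord : (∑ i, (k i : ℝ) * ((μ • z - ic l₀) i))
          = μ * ((∑ i, (k i : ℝ) * z i) - ω) := by
        have hterm : ∀ i : Fin 3, (k i : ℝ) * ((μ • z - ic l₀) i)
            = μ * ((k i : ℝ) * z i - (k i : ℝ) * ((l₀ i : ℝ)/μ)) := by
          intro i
          have : (μ • z - ic l₀) i = μ * z i - (l₀ i : ℝ) := by
            simp [hic, PiLp.sub_apply, PiLp.smul_apply, smul_eq_mul, PiLp.toLp_apply]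
          rw [this]
          field_simp
        rw [Finset.sum_congr rfl (fun i _ => hterm i), ← Finset.mul_sum, hω,
          Finset.sum_sub_distrib]
      rw [hg]
      simp only
      rw [hcoord, ← hαtr, hc, smul_eq_mul]
      push_cast
      have hμc : (μ:ℂ) ≠ 0 := by exact_mod_cast ne_of_gt hμ0
      field_simp
      ring
    -- pass to iterated derivatives
    have hEq : (fun z => deriv (fun s => Φ μ s z) τ +
        Complex.I * ((∑ i, (k i : ℝ) * z i : ℝ) : ℂ) * Φ μ τ z) =ᶠ[𝓝 y]
        (fun z => c • g (μ • z - ic l₀)) := by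
      filter_upwards [Metric.ball_mem_nhds y hεμ] with z hz
      exact hkey z (by simpa [Metric.mem_ball] using hz)
    rw [aux_evEq_iteratedFDeriv hEq r]
    -- norm computation
    have hcnorm : ‖c‖ = μ⁻¹ := by
      rw [hc, norm_mul]
      have hre : (-Complex.I * (ω:ℂ) * (τ:ℂ)).re = 0 := by
        simp [Complex.mul_re]
      rw [Complex.norm_exp, hre, Real.exp_zero,
        one_mul, norm_inv]
      simp [abs_of_pos hμ0]
    set L : EuclideanSpace ℝ (Fin 3) →L[ℝ] EuclideanSpace ℝ (Fin 3) :=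
      μ • ContinuousLinearMap.id ℝ _ with hL
    have hgb : ContDiff ℝ (⊤ : ℕ∞) (fun w => g (w - ic l₀)) :=
      hgsm.comp (contDiff_id.sub contDiff_const)
    have hcomp : (fun z : EuclideanSpace ℝ (Fin 3) => g (μ • z - ic l₀)) =
        (fun w => g (w - ic l₀)) ∘ L := by
      funext z
      simp [hL, Function.comp]
    have hsm2 : ContDiff ℝ (⊤ : ℕ∞) (fun z : EuclideanSpace ℝ (Fin 3) => g (μ • z - ic l₀)) := by
      rw [hcomp]; exact hgb.comp L.contDiff
    have h1 : iteratedFDeriv ℝ r (fun z => c • g (μ • z - ic l₀)) y =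
        c • iteratedFDeriv ℝ r (fun z => g (μ • z - ic l₀)) y :=
      iteratedFDeriv_const_smul_apply' (hsm2.of_le (by exact_mod_cast le_top)).contDiffAt
    rw [h1, norm_smul, hcnorm]
    have hbound : ‖iteratedFDeriv ℝ r (fun z => g (μ • z - ic l₀)) y‖ ≤ Cg * μ ^ r := by
      rw [hcomp, L.iteratedFDeriv_comp_right hgb y (by exact_mod_cast (le_top : (r:ℕ∞) ≤ ⊤))]
      calc ‖(iteratedFDeriv ℝ r (fun w => g (w - ic l₀)) (L y)).compContinuousLinearMap
            fun _ => L‖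
          ≤ ‖iteratedFDeriv ℝ r (fun w => g (w - ic l₀)) (L y)‖ * ∏ _i : Fin r, ‖L‖ :=
            ContinuousMultilinearMap.norm_compContinuousLinearMap_le _ _
        _ ≤ Cg * μ ^ r := by
            apply mul_le_mul
            · rw [aux_itfd_sub_const g hgsm (ic l₀) r (L y)]
              exact hCg _
            · calc (∏ _i : Fin r, ‖L‖) = ‖L‖ ^ r := by
                    rw [Finset.prod_const, Finset.card_univ, Fintype.card_fin]
                _ ≤ μ ^ r := by
                  apply pow_le_pow_left₀ (norm_nonneg _)
                  apply ContinuousLinearMap.opNorm_le_bound _ (le_of_lt hμ0)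
                  intro x
                  simp only [hL, ContinuousLinearMap.smul_apply,
                    ContinuousLinearMap.id_apply, norm_smul, Real.norm_eq_abs,
                    abs_of_pos hμ0, le_refl]
            · positivity
            · exact hCg0
    calc μ⁻¹ * ‖iteratedFDeriv ℝ r (fun z => g (μ • z - ic l₀)) y‖
        ≤ μ⁻¹ * (Cg * μ ^ r) := by
          apply mul_le_mul_of_nonneg_left hbound (by positivity)
      _ = Cg * (μ ^ r / μ) := by ring
      _ ≤ (Cg + 1) * (μ ^ r / μ) := by
          apply mul_le_mul_of_nonneg_right (by linarith) (by positivity)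
      _ = (Cg + 1) * μ ^ ((r:ℝ) - 1) := by rw [hrpow]
  · -- no relevant lattice point: everything vanishes near y
    have hzero : ∀ s : ℝ, ∀ z : EuclideanSpace ℝ (Fin 3), dist z y < ε / μ → Φ μ s z = 0 := by
      intro s z hz
      rw [hΦ]
      have hterm : ∀ l : {l : Fin 3 → ℤ // ∀ i, ((l i : ZMod 2)) = v i},
          (α l.1 (μ • z) : ℂ) *
            Complex.exp (-Complex.I * ((∑ i, (k i : ℝ) * ((l.1 i : ℝ) / μ) : ℝ) : ℂ) * (s : ℂ))
            = 0 := by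
        intro l
        have hα0z : α l.1 (μ • z) = 0 := by
          by_contra h
          rw [hαeq] at h
          have h1 : ‖μ • z - ic l.1‖ < c2 := hα0supp _ h
          have h2 : ‖μ • y - ic l.1‖ < c2 + ε := by
            calc ‖μ • y - ic l.1‖ ≤ ‖μ • y - μ • z‖ + ‖μ • z - ic l.1‖ :=
                  norm_sub_le_norm_sub_add_norm_sub _ _ _
              _ < ε + c2 := by
                  have := hnear z hz
                  rw [norm_sub_rev] at this
                  linarith
              _ = c2 + ε := by ring
          exact hex ⟨l.1, l.2, h2⟩
        simp [hα0z]
      rw [tsum_congr hterm]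
      simp
    have hFz : (fun z => deriv (fun s => Φ μ s z) τ +
        Complex.I * ((∑ i, (k i : ℝ) * z i : ℝ) : ℂ) * Φ μ τ z) =ᶠ[𝓝 y]
        (fun _ => (0:ℂ)) := by
      filter_upwards [Metric.ball_mem_nhds y hεμ] with z hz
      have h1 : (fun s => Φ μ s z) = fun _ => (0:ℂ) :=
        funext fun s => hzero s z (by simpa [Metric.mem_ball] using hz)
      rw [h1, hzero τ z (by simpa [Metric.mem_ball] using hz)]
      simp
    rw [aux_evEq_iteratedFDeriv hFz r]
    have h0 : iteratedFDeriv ℝ r (fun _ : EuclideanSpace ℝ (Fin 3) => (0:ℂ)) y = 0 := by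
      simp [iteratedFDeriv_zero_fun]
    rw [h0, norm_zero]
    positivity
end
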